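/- arXiv:math/0204280 — 2 statements merged into one kernel-verified Lean document; each statement's English description precedes it below -/
import Mathlib

section
/- Let (T, m_T, 1_T, μ_T, θ_T) be an A-torsor. If T is commutative as an algebra (m_T = m_T^op), or if the law μ_T is commutative (μ_T = μ_T^op := τ_(13)∘μ_T), then θ_T = Id_T. -/
/- Common setup: quantum torsors following Grunspan, "Quantum torsors".
   `T` is an `A`-algebra; the torsor law is an algebra morphism
   `μ : T → T ⊗[A] (Tᵐᵒᵖ ⊗[A] T)` and `θ : T → T` is an algebra automorphism. -/

open scoped TensorProduct
open TensorProduct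

namespace QT

variable (A : Type*) [CommRing A] (T : Type*) [Ring T] [Algebra A T]

/-- `unop` as an `A`-linear map. -/
noncomputable def unopL : Tᵐᵒᵖ →ₗ[A] T :=
  (MulOpposite.opLinearEquiv A : T ≃ₗ[A] Tᵐᵒᵖ).symm.toLinearMap

/-- `op` as an `A`-linear map. -/
noncomputable def opL : T →ₗ[A] Tᵐᵒᵖ :=
  (MulOpposite.opLinearEquiv A : T ≃ₗ[A] Tᵐᵒᵖ).toLinearMap

/-- multiplication of `T` as a linear map. -/
noncomputable def mulTT : T ⊗[A] T →ₗ[A] T := LinearMap.mul' A T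

/-- multiplication `Tᵐᵒᵖ ⊗ T → T`, forgetting the `op`s. -/
noncomputable def mulOT : Tᵐᵒᵖ ⊗[A] T →ₗ[A] T :=
  mulTT A T ∘ₗ map (unopL A T) LinearMap.id

/-- multiplication `T ⊗ Tᵐᵒᵖ → T`, forgetting the `op`s. -/
noncomputable def mulTO : T ⊗[A] Tᵐᵒᵖ →ₗ[A] T :=
  mulTT A T ∘ₗ map LinearMap.id (unopL A T)

/-- the permutation `τ₍₁₃₎` of the outer factors of `T ⊗ Tᵐᵒᵖ ⊗ T`. -/
noncomputable def tau13 : T ⊗[A] (Tᵐᵒᵖ ⊗[A] T) ≃ₗ[A] T ⊗[A] (Tᵐᵒᵖ ⊗[A] T) :=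
  TensorProduct.congr (LinearEquiv.refl A T) (TensorProduct.comm A Tᵐᵒᵖ T) ≪≫ₗ
  (TensorProduct.assoc A T T Tᵐᵒᵖ).symm ≪≫ₗ
  TensorProduct.congr (TensorProduct.comm A T T) (LinearEquiv.refl A Tᵐᵒᵖ) ≪≫ₗ
  TensorProduct.assoc A T T Tᵐᵒᵖ ≪≫ₗ
  TensorProduct.congr (LinearEquiv.refl A T) (TensorProduct.comm A T Tᵐᵒᵖ)

/-- exchange the `op` pattern `T ⊗ Tᵐᵒᵖ ⊗ T ↦ Tᵐᵒᵖ ⊗ T ⊗ Tᵐᵒᵖ` (identity on elements). -/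
noncomputable def oppify : T ⊗[A] (Tᵐᵒᵖ ⊗[A] T) →ₗ[A] Tᵐᵒᵖ ⊗[A] (T ⊗[A] Tᵐᵒᵖ) :=
  map (opL A T) (map (unopL A T) (opL A T))

/-- `μᵒᵖ := τ₍₁₃₎ ∘ μ` applied to an element of `Tᵐᵒᵖ`, with the `op`-pattern adjusted. -/
noncomputable def muopO (μ : T →ₗ[A] T ⊗[A] (Tᵐᵒᵖ ⊗[A] T)) :
    Tᵐᵒᵖ →ₗ[A] Tᵐᵒᵖ ⊗[A] (T ⊗[A] Tᵐᵒᵖ) :=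
  oppify A T ∘ₗ (tau13 A T).toLinearMap ∘ₗ μ ∘ₗ unopL A T

/-- `θ` viewed as a map of `Tᵐᵒᵖ`. -/
noncomputable def thetaOp (θ : T →ₗ[A] T) : Tᵐᵒᵖ →ₗ[A] Tᵐᵒᵖ :=
  opL A T ∘ₗ θ ∘ₗ unopL A T

/-- multiplication of the first two factors of `T ⊗ Tᵐᵒᵖ ⊗ T`. -/
noncomputable def m12 : T ⊗[A] (Tᵐᵒᵖ ⊗[A] T) →ₗ[A] T ⊗[A] T :=
  map (mulTO A T) LinearMap.id ∘ₗ (TensorProduct.assoc A T Tᵐᵒᵖ T).symm.toLinearMap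

/-- `Id ⊗ Id ⊗ μ` on `T ⊗ Tᵐᵒᵖ ⊗ T`. -/
noncomputable def mu3 (μ : T →ₗ[A] T ⊗[A] (Tᵐᵒᵖ ⊗[A] T)) :
    T ⊗[A] (Tᵐᵒᵖ ⊗[A] T) →ₗ[A] T ⊗[A] (Tᵐᵒᵖ ⊗[A] (T ⊗[A] (Tᵐᵒᵖ ⊗[A] T))) :=
  map LinearMap.id (map LinearMap.id μ)

/-- `μ ⊗ Id ⊗ Id` on `T ⊗ Tᵐᵒᵖ ⊗ T` (suitably reassociated). -/
noncomputable def mu1 (μ : T →ₗ[A] T ⊗[A] (Tᵐᵒᵖ ⊗[A] T)) :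
    T ⊗[A] (Tᵐᵒᵖ ⊗[A] T) →ₗ[A] T ⊗[A] (Tᵐᵒᵖ ⊗[A] (T ⊗[A] (Tᵐᵒᵖ ⊗[A] T))) :=
  map LinearMap.id (TensorProduct.assoc A Tᵐᵒᵖ T (Tᵐᵒᵖ ⊗[A] T)).toLinearMap ∘ₗ
  (TensorProduct.assoc A T (Tᵐᵒᵖ ⊗[A] T) (Tᵐᵒᵖ ⊗[A] T)).toLinearMap ∘ₗ
  map μ LinearMap.id

/-- `θ` applied to the third of five tensor factors. -/
noncomputable def theta3 (θ : T →ₗ[A] T) :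
    T ⊗[A] (Tᵐᵒᵖ ⊗[A] (T ⊗[A] (Tᵐᵒᵖ ⊗[A] T))) →ₗ[A] T ⊗[A] (Tᵐᵒᵖ ⊗[A] (T ⊗[A] (Tᵐᵒᵖ ⊗[A] T))) :=
  map LinearMap.id (map LinearMap.id (map θ LinearMap.id))

/-- `Id ⊗ μᵒᵖ ⊗ Id` on `T ⊗ Tᵐᵒᵖ ⊗ T`. -/
noncomputable def muMid (μ : T →ₗ[A] T ⊗[A] (Tᵐᵒᵖ ⊗[A] T)) :
    T ⊗[A] (Tᵐᵒᵖ ⊗[A] T) →ₗ[A] T ⊗[A] (Tᵐᵒᵖ ⊗[A] (T ⊗[A] (Tᵐᵒᵖ ⊗[A] T))) :=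
  map LinearMap.id
    (map LinearMap.id (TensorProduct.assoc A T Tᵐᵒᵖ T).toLinearMap ∘ₗ
     (TensorProduct.assoc A Tᵐᵒᵖ (T ⊗[A] Tᵐᵒᵖ) T).toLinearMap ∘ₗ
     map (muopO A T μ) LinearMap.id)

/-- Grunspan's axioms for a quantum torsor `(T, m_T, 1_T, μ, θ)` (Definition 2.1). -/
structure IsTorsor (μ : T →ₗ[A] T ⊗[A] (Tᵐᵒᵖ ⊗[A] T)) (θ : T →ₗ[A] T) : Prop where
  /-- `μ` is an algebra morphism into `T ⊗ Tᵒᵖ ⊗ T`: unitality -/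
  map_one : μ 1 = 1
  /-- `μ` is an algebra morphism into `T ⊗ Tᵒᵖ ⊗ T`: multiplicativity -/
  map_mul : ∀ x y : T, μ (x * y) = μ x * μ y
  /-- `θ` is an algebra automorphism -/
  theta_one : θ 1 = 1
  theta_mul : ∀ x y : T, θ (x * y) = θ x * θ y
  theta_bij : Function.Bijective θ
  /-- `(Id ⊗ m) ∘ μ (x) = x ⊗ 1` -/
  left_law : ∀ x : T, map LinearMap.id (mulOT A T) (μ x) = x ⊗ₜ[A] (1 : T)
  /-- `(m ⊗ Id) ∘ μ (x) = 1 ⊗ x` -/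
  right_law : ∀ x : T, m12 A T (μ x) = (1 : T) ⊗ₜ[A] x
  /-- `(Id ⊗ Id ⊗ μ) ∘ μ = (μ ⊗ Id ⊗ Id) ∘ μ` -/
  coassoc : ∀ x : T, mu3 A T μ (μ x) = mu1 A T μ (μ x)
  /-- `θ⁽³⁾ ∘ (μ ⊗ Id ⊗ Id) ∘ μ = (Id ⊗ μᵒᵖ ⊗ Id) ∘ μ` -/
  theta_law : ∀ x : T, theta3 A T θ (mu1 A T μ (μ x)) = muMid A T μ (μ x)
  /-- `(θ ⊗ θ ⊗ θ) ∘ μ = μ ∘ θ` -/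
  theta_compat : ∀ x : T, map θ (map (thetaOp A T θ) θ) (μ x) = μ (θ x)

/-- multiplication of all five factors of `T ⊗ Tᵐᵒᵖ ⊗ T ⊗ Tᵐᵒᵖ ⊗ T`, in order, in `T`. -/
noncomputable def mult5 : T ⊗[A] (Tᵐᵒᵖ ⊗[A] (T ⊗[A] (Tᵐᵒᵖ ⊗[A] T))) →ₗ[A] T :=
  mulTT A T ∘ₗ
    map LinearMap.id
      (mulOT A T ∘ₗ map LinearMap.id (mulTT A T ∘ₗ map LinearMap.id (mulOT A T)))

/-- the law `μᵒᵖ = τ₍₁₃₎ ∘ μ` of the opposite torsor, as a map on `Tᵐᵒᵖ`. -/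
noncomputable def muOpp (μ : T →ₗ[A] T ⊗[A] (Tᵐᵒᵖ ⊗[A] T)) :
    Tᵐᵒᵖ →ₗ[A] Tᵐᵒᵖ ⊗[A] (Tᵐᵒᵖᵐᵒᵖ ⊗[A] Tᵐᵒᵖ) :=
  map (opL A T) (map (opL A Tᵐᵒᵖ) (opL A T)) ∘ₗ (tau13 A T).toLinearMap ∘ₗ μ ∘ₗ unopL A T

/-- the defining condition of `H_l(T)`: left-hand side. -/
noncomputable def lmapL (μ : T →ₗ[A] T ⊗[A] (Tᵐᵒᵖ ⊗[A] T)) (θ : T →ₗ[A] T) :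
    T ⊗[A] Tᵐᵒᵖ →ₗ[A] T ⊗[A] (Tᵐᵒᵖ ⊗[A] (T ⊗[A] Tᵐᵒᵖ)) :=
  map LinearMap.id (map LinearMap.id (map θ LinearMap.id)) ∘ₗ
  map LinearMap.id (TensorProduct.assoc A Tᵐᵒᵖ T Tᵐᵒᵖ).toLinearMap ∘ₗ
  (TensorProduct.assoc A T (Tᵐᵒᵖ ⊗[A] T) Tᵐᵒᵖ).toLinearMap ∘ₗ
  map μ LinearMap.id

/-- the defining condition of `H_l(T)`: right-hand side `(Id ⊗ μᵒᵖ)`. -/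
noncomputable def rmapL (μ : T →ₗ[A] T ⊗[A] (Tᵐᵒᵖ ⊗[A] T)) :
    T ⊗[A] Tᵐᵒᵖ →ₗ[A] T ⊗[A] (Tᵐᵒᵖ ⊗[A] (T ⊗[A] Tᵐᵒᵖ)) :=
  map LinearMap.id (muopO A T μ)

/-- the subspace `H_l(T) ⊆ T ⊗ Tᵐᵒᵖ`. -/
noncomputable def Hl (μ : T →ₗ[A] T ⊗[A] (Tᵐᵒᵖ ⊗[A] T)) (θ : T →ₗ[A] T) :
    Submodule A (T ⊗[A] Tᵐᵒᵖ) :=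
  LinearMap.eqLocus (lmapL A T μ θ) (rmapL A T μ)

/-- the defining condition of `H_r(T)`: left-hand side. -/
noncomputable def lmapR (μ : T →ₗ[A] T ⊗[A] (Tᵐᵒᵖ ⊗[A] T)) (θ : T →ₗ[A] T) :
    Tᵐᵒᵖ ⊗[A] T →ₗ[A] Tᵐᵒᵖ ⊗[A] (T ⊗[A] (Tᵐᵒᵖ ⊗[A] T)) :=
  map LinearMap.id (map θ LinearMap.id) ∘ₗ map LinearMap.id μ

/-- the defining condition of `H_r(T)`: right-hand side `(μᵒᵖ ⊗ Id)`. -/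
noncomputable def rmapR (μ : T →ₗ[A] T ⊗[A] (Tᵐᵒᵖ ⊗[A] T)) :
    Tᵐᵒᵖ ⊗[A] T →ₗ[A] Tᵐᵒᵖ ⊗[A] (T ⊗[A] (Tᵐᵒᵖ ⊗[A] T)) :=
  map LinearMap.id (TensorProduct.assoc A T Tᵐᵒᵖ T).toLinearMap ∘ₗ
  (TensorProduct.assoc A Tᵐᵒᵖ (T ⊗[A] Tᵐᵒᵖ) T).toLinearMap ∘ₗ
  map (muopO A T μ) LinearMap.id

/-- the subspace `H_r(T) ⊆ Tᵐᵒᵖ ⊗ T`. -/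
noncomputable def Hr (μ : T →ₗ[A] T ⊗[A] (Tᵐᵒᵖ ⊗[A] T)) (θ : T →ₗ[A] T) :
    Submodule A (Tᵐᵒᵖ ⊗[A] T) :=
  LinearMap.eqLocus (lmapR A T μ θ) (rmapR A T μ)

/-- comultiplication `(μ ⊗ Id)` of `H_l(T)`, on the ambient space. -/
noncomputable def deltaL (μ : T →ₗ[A] T ⊗[A] (Tᵐᵒᵖ ⊗[A] T)) :
    T ⊗[A] Tᵐᵒᵖ →ₗ[A] (T ⊗[A] Tᵐᵒᵖ) ⊗[A] (T ⊗[A] Tᵐᵒᵖ) :=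
  (TensorProduct.assoc A T Tᵐᵒᵖ (T ⊗[A] Tᵐᵒᵖ)).symm.toLinearMap ∘ₗ
  map LinearMap.id (TensorProduct.assoc A Tᵐᵒᵖ T Tᵐᵒᵖ).toLinearMap ∘ₗ
  (TensorProduct.assoc A T (Tᵐᵒᵖ ⊗[A] T) Tᵐᵒᵖ).toLinearMap ∘ₗ
  map μ LinearMap.id

/-- `x ↦ ε(x) • 1` for `H_l(T)`, i.e. `x ↦ m_T(x) ⊗ 1`. -/
noncomputable def epsL : T ⊗[A] Tᵐᵒᵖ →ₗ[A] T ⊗[A] Tᵐᵒᵖ :=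
  (TensorProduct.mk A T Tᵐᵒᵖ).flip 1 ∘ₗ mulTO A T

/-- antipode `x ↦ τ₍₁₂₎ ((Id ⊗ θ) x)` of `H_l(T)`, on the ambient space. -/
noncomputable def antipodeL (θ : T →ₗ[A] T) : T ⊗[A] Tᵐᵒᵖ →ₗ[A] T ⊗[A] Tᵐᵒᵖ :=
  map (unopL A T) (opL A T) ∘ₗ (TensorProduct.comm A T Tᵐᵒᵖ).toLinearMap ∘ₗ
  map LinearMap.id (thetaOp A T θ)

/-- comultiplication `(Id ⊗ μ)` of `H_r(T)`, on the ambient space. -/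
noncomputable def deltaR (μ : T →ₗ[A] T ⊗[A] (Tᵐᵒᵖ ⊗[A] T)) :
    Tᵐᵒᵖ ⊗[A] T →ₗ[A] (Tᵐᵒᵖ ⊗[A] T) ⊗[A] (Tᵐᵒᵖ ⊗[A] T) :=
  (TensorProduct.assoc A Tᵐᵒᵖ T (Tᵐᵒᵖ ⊗[A] T)).symm.toLinearMap ∘ₗ map LinearMap.id μ

/-- `x ↦ ε(x) • 1` for `H_r(T)`. -/
noncomputable def epsR : Tᵐᵒᵖ ⊗[A] T →ₗ[A] Tᵐᵒᵖ ⊗[A] T :=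
  TensorProduct.mk A Tᵐᵒᵖ T 1 ∘ₗ mulOT A T

/-- antipode of `H_r(T)`, on the ambient space. -/
noncomputable def antipodeR (θ : T →ₗ[A] T) : Tᵐᵒᵖ ⊗[A] T →ₗ[A] Tᵐᵒᵖ ⊗[A] T :=
  map (opL A T) (unopL A T) ∘ₗ (TensorProduct.comm A Tᵐᵒᵖ T).toLinearMap ∘ₗ
  map (thetaOp A T θ) LinearMap.id

/-- `H` is a sub-Hopf-algebra of the `A`-algebra `B` with respect to comultiplication `Δ`,
`unit∘counit = e` and antipode `S` (all given as maps of the ambient algebra; `e x = ε(x) • 1`). -/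
structure IsHopfOn (B : Type*) [Ring B] [Algebra A B] (H : Submodule A B)
    (Δ : B →ₗ[A] B ⊗[A] B) (e : B →ₗ[A] B) (S : B →ₗ[A] B) : Prop where
  one_mem : (1 : B) ∈ H
  mul_mem : ∀ x ∈ H, ∀ y ∈ H, x * y ∈ H
  comul_mem : ∀ x ∈ H, Δ x ∈ LinearMap.range (map H.subtype H.subtype)
  antipode_mem : ∀ x ∈ H, S x ∈ H
  counit_scalar : ∀ x ∈ H, ∃ a : A, e x = a • (1 : B)
  comul_one : Δ 1 = (1 : B) ⊗ₜ[A] (1 : B)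
  comul_mul : ∀ x ∈ H, ∀ y ∈ H, Δ (x * y) = Δ x * Δ y
  counit_one : e 1 = 1
  counit_mul : ∀ x ∈ H, ∀ y ∈ H, e (x * y) = e x * e y
  coassoc : ∀ x ∈ H, map Δ LinearMap.id (Δ x)
      = (TensorProduct.assoc A B B B).symm (map LinearMap.id Δ (Δ x))
  counit_left : ∀ x ∈ H, LinearMap.mul' A B (map e LinearMap.id (Δ x)) = x
  counit_right : ∀ x ∈ H, LinearMap.mul' A B (map LinearMap.id e (Δ x)) = x
  antipode_left : ∀ x ∈ H, LinearMap.mul' A B (map S LinearMap.id (Δ x)) = e x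
  antipode_right : ∀ x ∈ H, LinearMap.mul' A B (map LinearMap.id S (Δ x)) = e x

/-- `φ` restricts to an isomorphism of Hopf algebras between the sub-Hopf-algebra `H` of `B`
(with structure maps `Δ, e, S`) and the sub-Hopf-algebra `H'` of `B'` (with `Δ', e', S'`). -/
structure IsHopfIso {B : Type*} [Ring B] [Algebra A B] {B' : Type*} [Ring B'] [Algebra A B']
    (H : Submodule A B) (Δ : B →ₗ[A] B ⊗[A] B) (e : B →ₗ[A] B) (S : B →ₗ[A] B)
    (H' : Submodule A B') (Δ' : B' →ₗ[A] B' ⊗[A] B') (e' : B' →ₗ[A] B') (S' : B' →ₗ[A] B')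
    (φ : B →ₗ[A] B') : Prop where
  maps_to : ∀ x ∈ H, φ x ∈ H'
  inj : Set.InjOn φ (H : Set B)
  surj : ∀ y ∈ H', ∃ x ∈ H, φ x = y
  map_one : φ 1 = 1
  map_mul : ∀ x ∈ H, ∀ y ∈ H, φ (x * y) = φ x * φ y
  comul_comp : ∀ x ∈ H, map φ φ (Δ x) = Δ' (φ x)
  counit_comp : ∀ x ∈ H, φ (e x) = e' (φ x)
  antipode_comp : ∀ x ∈ H, φ (S x) = S' (φ x)

/-- the left coaction: `μ` with its target reassociated as `(T ⊗ Tᵐᵒᵖ) ⊗ T`. -/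
noncomputable def rhoL (μ : T →ₗ[A] T ⊗[A] (Tᵐᵒᵖ ⊗[A] T)) :
    T →ₗ[A] (T ⊗[A] Tᵐᵒᵖ) ⊗[A] T :=
  (TensorProduct.assoc A T Tᵐᵒᵖ T).symm.toLinearMap ∘ₗ μ

/-- `(ε ⊗ Id)`-contraction for the left coaction. -/
noncomputable def collapseL : (T ⊗[A] Tᵐᵒᵖ) ⊗[A] T →ₗ[A] T :=
  mulTT A T ∘ₗ map (mulTO A T) LinearMap.id

/-- `(Id ⊗ ε)`-contraction for the right coaction. -/
noncomputable def collapseR : T ⊗[A] (Tᵐᵒᵖ ⊗[A] T) →ₗ[A] T :=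
  mulTT A T ∘ₗ map LinearMap.id (mulOT A T)

/-- forget the `op` on the second factor. -/
noncomputable def forgetL : T ⊗[A] Tᵐᵒᵖ ≃ₗ[A] T ⊗[A] T :=
  TensorProduct.congr (LinearEquiv.refl A T) (MulOpposite.opLinearEquiv A : T ≃ₗ[A] Tᵐᵒᵖ).symm

/-- forget the `op` on the first factor. -/
noncomputable def forgetR : Tᵐᵒᵖ ⊗[A] T ≃ₗ[A] T ⊗[A] T :=
  TensorProduct.congr (MulOpposite.opLinearEquiv A : T ≃ₗ[A] Tᵐᵒᵖ).symm (LinearEquiv.refl A T)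

end QT

/-!
Multiply out all five tensor factors on both sides of the θ-law (iv), evaluated at `μ x`.
On the left, axiom (ii) collapses the inner `μ` to `θ`, and axiom (i) then leaves `θ x`.
On the right, the middle factor `μᵒᵖ(b)` multiplies out to the product of `μ b` in reverse
order; this equals the ordinary product, hence `b`, when `T` is commutative or `μ = μᵒᵖ`,
and axiom (i) then leaves `x`.
-/

namespace QT

variable (A : Type*) [CommRing A] (T : Type*) [Ring T] [Algebra A T]

@[simp] lemma unopL_apply (a : Tᵐᵒᵖ) : unopL A T a = a.unop := rfl

@[simp] lemma opL_apply (a : T) : opL A T a = MulOpposite.op a := rfl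

@[simp] lemma mulTT_tmul (a b : T) : mulTT A T (a ⊗ₜ b) = a * b := rfl

@[simp] lemma mulOT_tmul (a : Tᵐᵒᵖ) (b : T) : mulOT A T (a ⊗ₜ b) = a.unop * b := rfl

@[simp] lemma mulTO_tmul (a : T) (b : Tᵐᵒᵖ) : mulTO A T (a ⊗ₜ b) = a * b.unop := rfl

@[simp] lemma collapseR_tmul (a : T) (b : Tᵐᵒᵖ) (c : T) :
    collapseR A T (a ⊗ₜ (b ⊗ₜ c)) = a * (b.unop * c) := rfl

@[simp] lemma tau13_tmul (a : T) (b : Tᵐᵒᵖ) (c : T) :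
    tau13 A T (a ⊗ₜ (b ⊗ₜ c)) = c ⊗ₜ (b ⊗ₜ a) := by
  simp [tau13]

lemma collapseR_tau13_of_comm (hT : ∀ x y : T, x * y = y * x) (z : T ⊗[A] (Tᵐᵒᵖ ⊗[A] T)) :
    collapseR A T (tau13 A T z) = collapseR A T z := by
  have : collapseR A T ∘ₗ (tau13 A T).toLinearMap = collapseR A T := by
    ext a b c
    simp only [AlgebraTensorModule.curry_apply, LinearMap.restrictScalars_self, curry_apply,
      LinearMap.coe_comp, LinearEquiv.coe_coe, Function.comp_apply, tau13_tmul, collapseR_tmul]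
    rw [hT c, hT b.unop a, mul_assoc]
  exact LinearMap.congr_fun this z

lemma mult5_comp_theta3_comp_assoc (θ : T →ₗ[A] T) :
    mult5 A T ∘ₗ theta3 A T θ ∘ₗ
      (map LinearMap.id (TensorProduct.assoc A Tᵐᵒᵖ T (Tᵐᵒᵖ ⊗[A] T)).toLinearMap ∘ₗ
       (TensorProduct.assoc A T (Tᵐᵒᵖ ⊗[A] T) (Tᵐᵒᵖ ⊗[A] T)).toLinearMap)
    = mulTT A T ∘ₗ map (mulTT A T ∘ₗ map LinearMap.id θ ∘ₗ m12 A T) (mulOT A T) := by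
  ext a b c d e
  simp [mult5, theta3, m12, mul_assoc]

lemma mult5_comp_mu1 (μ : T →ₗ[A] T ⊗[A] (Tᵐᵒᵖ ⊗[A] T)) (θ : T →ₗ[A] T) :
    mult5 A T ∘ₗ theta3 A T θ ∘ₗ mu1 A T μ
    = mulTT A T ∘ₗ map ((mulTT A T ∘ₗ map LinearMap.id θ ∘ₗ m12 A T) ∘ₗ μ) (mulOT A T) := by
  rw [← LinearMap.comp_id (mulOT A T), map_comp, ← LinearMap.comp_assoc (map μ _),
    ← mult5_comp_theta3_comp_assoc]
  rfl

lemma mult5_comp_assoc_oppify :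
    mult5 A T ∘ₗ map LinearMap.id
      (map LinearMap.id (TensorProduct.assoc A T Tᵐᵒᵖ T).toLinearMap ∘ₗ
       (TensorProduct.assoc A Tᵐᵒᵖ (T ⊗[A] Tᵐᵒᵖ) T).toLinearMap ∘ₗ map (oppify A T) LinearMap.id)
    = collapseR A T ∘ₗ map LinearMap.id (map (opL A T ∘ₗ collapseR A T) LinearMap.id) := by
  ext a b c d e
  simp [mult5, oppify, mul_assoc]

lemma mult5_comp_muMid (μ : T →ₗ[A] T ⊗[A] (Tᵐᵒᵖ ⊗[A] T)) :
    mult5 A T ∘ₗ muMid A T μ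
    = collapseR A T ∘ₗ map LinearMap.id (map
        (opL A T ∘ₗ collapseR A T ∘ₗ (tau13 A T).toLinearMap ∘ₗ μ ∘ₗ unopL A T) LinearMap.id) := by
  have hcomp := congrArg
    (· ∘ₗ map LinearMap.id (map ((tau13 A T).toLinearMap ∘ₗ μ ∘ₗ unopL A T) LinearMap.id))
    (mult5_comp_assoc_oppify A T)
  simp only [LinearMap.comp_assoc, ← map_comp, LinearMap.comp_id] at hcomp
  exact hcomp

namespace IsTorsor

variable {A T} {μ : T →ₗ[A] T ⊗[A] (Tᵐᵒᵖ ⊗[A] T)} {θ : T →ₗ[A] T}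

lemma collapseR_apply (h : IsTorsor A T μ θ) (x : T) : collapseR A T (μ x) = x := by
  simpa [collapseR] using congrArg (mulTT A T) (h.left_law x)

lemma collapseR_tau13_apply (h : IsTorsor A T μ θ)
    (hc : (∀ x y : T, x * y = y * x) ∨ (∀ x : T, tau13 A T (μ x) = μ x)) (x : T) :
    collapseR A T (tau13 A T (μ x)) = x := by
  rcases hc with hT | hμ
  · rw [collapseR_tau13_of_comm A T hT, h.collapseR_apply]
  · rw [hμ, h.collapseR_apply]

lemma mulTT_theta_m12_comp (h : IsTorsor A T μ θ) :
    (mulTT A T ∘ₗ map LinearMap.id θ ∘ₗ m12 A T) ∘ₗ μ = θ := by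
  ext x
  simp [h.right_law x]

lemma mult5_theta3_mu1_apply (h : IsTorsor A T μ θ) (x : T) :
    mult5 A T (theta3 A T θ (mu1 A T μ (μ x))) = θ x := by
  have hmult := LinearMap.congr_fun (mult5_comp_mu1 A T μ θ) (μ x)
  simp only [LinearMap.comp_apply] at hmult
  rw [hmult, h.mulTT_theta_m12_comp, ← LinearMap.comp_id θ, ← LinearMap.id_comp (mulOT A T),
    map_comp, LinearMap.comp_apply, h.left_law]
  simp

lemma mult5_muMid_apply (h : IsTorsor A T μ θ)
    (hc : (∀ x y : T, x * y = y * x) ∨ (∀ x : T, tau13 A T (μ x) = μ x)) (x : T) :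
    mult5 A T (muMid A T μ (μ x)) = x := by
  have hid : opL A T ∘ₗ collapseR A T ∘ₗ (tau13 A T).toLinearMap ∘ₗ μ ∘ₗ unopL A T
      = LinearMap.id := by
    ext b
    simp [h.collapseR_tau13_apply hc]
  rw [← LinearMap.comp_apply (mult5 A T), mult5_comp_muMid, hid, map_id, map_id,
    LinearMap.comp_id, h.collapseR_apply]

end IsTorsor

end QT

open TensorProduct QT in
theorem theta_eq_id_general
    (A : Type*) [CommRing A]
    (T : Type*) [Ring T] [Algebra A T]
    (μ : T →ₗ[A] T ⊗[A] (Tᵐᵒᵖ ⊗[A] T)) (θ : T →ₗ[A] T)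
    (h : IsTorsor A T μ θ)
    (hc : (∀ x y : T, x * y = y * x) ∨ (∀ x : T, tau13 A T (μ x) = μ x)) :
    θ = LinearMap.id := by
  ext x
  rw [← h.mult5_theta3_mu1_apply, h.theta_law, h.mult5_muMid_apply hc, LinearMap.id_apply]

open TensorProduct QT in
/-- if the torsor `(T, m_T, 1_T, μ_T, θ_T)` is commutative as an algebra,
or is endowed with a commutative law (`μ_T = μ_Tᵒᵖ = τ₍₁₃₎ ∘ μ_T`), then `θ_T = Id`. -/
theorem theta_eq_id (k : Type*) [Field k]
    (A : Type*) [CommRing A] [IsDomain A] [Algebra k A]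
    (T : Type*) [Ring T] [Algebra A T]
    (μ : T →ₗ[A] T ⊗[A] (Tᵐᵒᵖ ⊗[A] T)) (θ : T →ₗ[A] T)
    (h : IsTorsor A T μ θ)
    (hc : (∀ x y : T, x * y = y * x) ∨ (∀ x : T, tau13 A T (μ x) = μ x)) :
    θ = LinearMap.id :=
  theta_eq_id_general A T μ θ h hc
end

section
/- Let K = k[T]/(P) be a finite Galois extension of a field k with primitive element t := cl(T) and Galois group G := Gal(K/k). Identify K ⊗_k K with K[T]/(P) (t ⊗ 1 ↦ cl(T), 1 ⊗ t ↦ t ∈ K), and for σ ∈ G set P_σ := Π_{τ ≠ σ} (t₁ − τ(t₂))/(σ(t₂) − τ(t₂)) ∈ K ⊗_k K, where t₁ := t ⊗ 1 and t₂ := 1 ⊗ t. Then the algebra morphism μ_K : K → K ⊗_k K ⊗_k K, x ↦ Σ_{σ ∈ G} P_σ ⊗ σ(x), makes (K, m_K, 1_K, μ_K, Id_K) a k-torsor; moreover every element of G is an automorphism of this torsor (i.e., commutes with μ_K in the appropriate sense). -/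
/- Common setup: quantum torsors following Grunspan, "Quantum torsors".
   `T` is an `A`-algebra; the torsor law is an algebra morphism
   `μ : T → T ⊗[A] Tᵐᵒᵖ ⊗[A] T` and `θ : T → T` is an algebra automorphism. -/

open scoped TensorProduct
open TensorProduct

namespace QT

section FunHopf

variable (k : Type*) [Field k] (G : Type*) [Fintype G]

/-- comultiplication of the Hopf algebra of `k`-valued functions on a finite group `G`
with multiplication `m` : `Δ(f) = ∑_{g,h} f(m g h) • (1_g ⊗ 1_h)`. -/
noncomputable def funDelta (m : G → G → G) : (G → k) →ₗ[k] (G → k) ⊗[k] (G → k) :=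
  letI := Classical.decEq G
  ∑ g : G, ∑ h : G,
    LinearMap.smulRight (LinearMap.proj (m g h))
      ((Pi.single g 1 : G → k) ⊗ₜ[k] (Pi.single h 1 : G → k))

/-- `unit ∘ counit` of the function Hopf algebra: `f ↦ f(e) • 1`. -/
noncomputable def funCounitE (e : G) : (G → k) →ₗ[k] (G → k) :=
  LinearMap.smulRight (LinearMap.proj e) (1 : G → k)

/-- antipode of the function Hopf algebra: `f ↦ f ∘ i`. -/
noncomputable def funAntipode (i : G → G) : (G → k) →ₗ[k] (G → k) :=
  LinearMap.funLeft k k i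

end FunHopf

section Galois

variable (k K : Type*) [Field k] [Field K] [Algebra k K] [FiniteDimensional k K]

/-- the idempotent `P_σ = ∏_{τ ≠ σ} (t₁ − τ(t₂)) / (σ(t₂) − τ(t₂)) ∈ K ⊗ K`. -/
noncomputable def Psigma (t : K) (σ : K ≃ₐ[k] K) : K ⊗[k] K :=
  letI := Classical.decEq (K ≃ₐ[k] K)
  ∏ τ ∈ Finset.univ.erase σ,
    ((t ⊗ₜ[k] (1 : K)) - ((1 : K) ⊗ₜ[k] (τ t))) * ((1 : K) ⊗ₜ[k] ((σ t - τ t)⁻¹))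

/-- regrouping `(K ⊗ K) ⊗ K ≅ K ⊗ Kᵐᵒᵖ ⊗ K`. -/
noncomputable def galoisConv : (K ⊗[k] K) ⊗[k] K ≃ₗ[k] K ⊗[k] (Kᵐᵒᵖ ⊗[k] K) :=
  TensorProduct.assoc k K K K ≪≫ₗ
  TensorProduct.congr (LinearEquiv.refl k K)
    (TensorProduct.congr (MulOpposite.opLinearEquiv k : K ≃ₗ[k] Kᵐᵒᵖ) (LinearEquiv.refl k K))

/-- the torsor law `μ_K(x) = ∑_σ P_σ ⊗ σ(x)` of a Galois extension `K/k`. -/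
noncomputable def muGalois (t : K) : K →ₗ[k] K ⊗[k] (Kᵐᵒᵖ ⊗[k] K) :=
  ∑ σ : K ≃ₐ[k] K,
    (galoisConv k K).toLinearMap ∘ₗ
      TensorProduct.mk k (K ⊗[k] K) K (Psigma k K t σ) ∘ₗ σ.toLinearMap

end Galois

end QT

/-!
For `ρ, π ∈ G` the evaluation `ρ ⊗ π : K ⊗ K → K` sends `P_σ` to `1` if `ρ = πσ` and to `0`
otherwise. Hence these evaluations separate the points of `K ⊗ K`, and, `K` being flat over `k`,
the evaluations `x₁ ⊗ ⋯ ⊗ xₙ ↦ ρ₁(x₁) ⋯ ρₙ(xₙ)` separate the points of every tensor power of `K`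
(the `Kᵐᵒᵖ` factors included). Such an evaluation sends `μ_K(x)` to `(ψ π⁻¹ ρ)(x)`, so every torsor
axiom, and the compatibility of `μ_K` with `G`, reduces to an identity in the group `G`.
-/

namespace GaloisTorsor

open TensorProduct QT

section MulEval

variable {k K V W U : Type*} [CommSemiring k] [CommSemiring K] [Algebra k K]
  [AddCommMonoid V] [Module k V] [AddCommMonoid W] [Module k W] [AddCommMonoid U] [Module k U]

noncomputable def mulEval (f : V →ₗ[k] K) (g : W →ₗ[k] K) : V ⊗[k] W →ₗ[k] K :=
  LinearMap.mul' k K ∘ₗ map f g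

@[simp]
lemma mulEval_tmul (f : V →ₗ[k] K) (g : W →ₗ[k] K) (v : V) (w : W) :
    mulEval f g (v ⊗ₜ w) = f v * g w := rfl

lemma mulEval_comp_map {V' W' : Type*} [AddCommMonoid V'] [Module k V'] [AddCommMonoid W']
    [Module k W'] (f : V' →ₗ[k] K) (g : W' →ₗ[k] K) (p : V →ₗ[k] V') (q : W →ₗ[k] W') :
    mulEval f g ∘ₗ map p q = mulEval (f ∘ₗ p) (g ∘ₗ q) :=
  TensorProduct.ext' fun _ _ => rfl

lemma mulEval_mulEval_comp_assoc (f : V →ₗ[k] K) (g : W →ₗ[k] K) (h : U →ₗ[k] K) :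
    mulEval f (mulEval g h) ∘ₗ (TensorProduct.assoc k V W U).toLinearMap
      = mulEval (mulEval f g) h :=
  TensorProduct.ext_threefold fun _ _ _ => by simp [mul_assoc]

lemma comp_mulEval (φ : K ≃ₐ[k] K) (f : V →ₗ[k] K) (g : W →ₗ[k] K) :
    φ.toLinearMap ∘ₗ mulEval f g = mulEval (φ.toLinearMap ∘ₗ f) (φ.toLinearMap ∘ₗ g) :=
  TensorProduct.ext' fun _ _ => by simp

lemma productMap_toLinearMap {A B : Type*} [Semiring A] [Algebra k A] [Semiring B] [Algebra k B]
    (f : A →ₐ[k] K) (g : B →ₐ[k] K) :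
    (Algebra.TensorProduct.productMap f g).toLinearMap = mulEval f.toLinearMap g.toLinearMap :=
  TensorProduct.ext' fun _ _ => rfl

end MulEval

lemma injective_pi_lTensor {R M V N ι : Type*} [CommRing R] [AddCommGroup M] [Module R M]
    [Module.Flat R M] [AddCommGroup V] [Module R V] [AddCommGroup N] [Module R N] [Finite ι]
    {F : ι → V →ₗ[R] N} (hF : Function.Injective (LinearMap.pi F)) :
    Function.Injective (LinearMap.pi fun i => (F i).lTensor M) := by
  classical
  cases nonempty_fintype ι
  have hpi : LinearMap.pi (fun i => (F i).lTensor M)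
      = (piRight R R M fun _ : ι => N).toLinearMap ∘ₗ (LinearMap.pi F).lTensor M := by
    refine TensorProduct.ext' fun m v => funext fun i => ?_
    simp
  rw [hpi]
  exact (piRight R R M fun _ : ι => N).injective.comp
    (Module.Flat.lTensor_preserves_injective_linearMap (M := M) _ hF)

section Separating

variable {k K : Type*} [Field k] [Field K] [Algebra k K]

noncomputable def opEval (π : K ≃ₐ[k] K) : Kᵐᵒᵖ →ₗ[k] K := π.toLinearMap ∘ₗ unopL k K

def GaloisSeparating {ι V : Type*} [AddCommMonoid V] [Module k V] (F : ι → V →ₗ[k] K) : Prop :=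
  Function.Injective (LinearMap.pi F) ∧ ∀ (π : K ≃ₐ[k] K) (i : ι), ∃ j, π.toLinearMap ∘ₗ F i = F j

noncomputable def eval3 (ρ π ψ : K ≃ₐ[k] K) : K ⊗[k] (Kᵐᵒᵖ ⊗[k] K) →ₗ[k] K :=
  mulEval ρ.toLinearMap (mulEval (opEval π) ψ.toLinearMap)

noncomputable def eval5 (ρ π a b c : K ≃ₐ[k] K) :
    K ⊗[k] (Kᵐᵒᵖ ⊗[k] (K ⊗[k] (Kᵐᵒᵖ ⊗[k] K))) →ₗ[k] K :=
  mulEval ρ.toLinearMap (mulEval (opEval π) (eval3 a b c))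

lemma galoisSeparating_algEquiv : GaloisSeparating fun σ : K ≃ₐ[k] K => σ.toLinearMap :=
  ⟨fun _ _ h => congr_fun h 1, fun π σ => ⟨π * σ, rfl⟩⟩

namespace GaloisSeparating

variable {ι V : Type*} [AddCommGroup V] [Module k V] {F : ι → V →ₗ[k] K}

lemma ext (hF : GaloisSeparating F) {u v : V} (h : ∀ i, F i u = F i v) : u = v :=
  hF.1 (funext h)

lemma eq_zero (hF : GaloisSeparating F) {v : V} (h : ∀ i, F i v = 0) : v = 0 :=
  hF.ext fun i => (h i).trans (map_zero _).symm

end GaloisSeparating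

lemma algEquiv_apply_injective {t : K} (ht : IntermediateField.adjoin k {t} = ⊤) :
    Function.Injective fun σ : K ≃ₐ[k] K => σ t := by
  intro σ τ h
  ext x
  have hx : x ∈ IntermediateField.adjoin k {t} := ht ▸ IntermediateField.mem_top
  induction hx using IntermediateField.adjoin_induction with
  | mem y hy => rwa [Set.mem_singleton_iff.mp hy]
  | algebraMap y => simp
  | add y z _ _ hy hz => rw [map_add, map_add, hy, hz]
  | inv y _ hy => rw [map_inv₀, map_inv₀, hy]
  | mul y z _ _ hy hz => rw [map_mul, map_mul, hy, hz]

lemma liftBaseChange_algEquiv_apply (σ : K ≃ₐ[k] K) (z : K ⊗[k] K) :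
    LinearMap.liftBaseChange K σ.toLinearMap z
      = mulEval (1 : K ≃ₐ[k] K).toLinearMap σ.toLinearMap z := by
  induction z using TensorProduct.induction_on with
  | zero => simp
  | tmul x y => simp
  | add u v hu hv => rw [map_add, map_add, hu, hv]

variable [FiniteDimensional k K]

open Classical in
lemma mulEval_Psigma {t : K} (ht : IntermediateField.adjoin k {t} = ⊤) (ρ π σ : K ≃ₐ[k] K) :
    mulEval ρ.toLinearMap π.toLinearMap (Psigma k K t σ) = if ρ = π * σ then 1 else 0 := by
  have hfactor : ∀ τ : K ≃ₐ[k] K,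
      Algebra.TensorProduct.productMap ρ.toAlgHom π.toAlgHom
        ((t ⊗ₜ[k] (1 : K) - (1 : K) ⊗ₜ[k] τ t) * (1 ⊗ₜ[k] (σ t - τ t)⁻¹))
      = (ρ t - π (τ t)) * (π (σ t) - π (τ t))⁻¹ := by
    intro τ
    simp [map_inv₀]
  have h := productMap_toLinearMap ρ.toAlgHom π.toAlgHom
  simp only [AlgEquiv.toAlgHom_toLinearMap, AlgEquiv.toLinearEquiv_toLinearMap] at h
  rw [← h, AlgHom.toLinearMap_apply, Psigma, map_prod, Finset.prod_congr rfl fun τ _ => hfactor τ]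
  split_ifs with hρ
  · subst hρ
    simp only [AlgEquiv.mul_apply]
    refine Finset.prod_eq_one fun τ hτ => mul_inv_cancel₀ (sub_ne_zero.mpr ?_)
    exact π.injective.ne ((algEquiv_apply_injective ht).ne (Finset.ne_of_mem_erase hτ).symm)
  · refine Finset.prod_eq_zero (i := π⁻¹ * ρ) (Finset.mem_erase.mpr ⟨?_, Finset.mem_univ _⟩) ?_
    · rintro rfl
      exact hρ (mul_inv_cancel_left π ρ).symm
    · rw [← AlgEquiv.mul_apply, mul_inv_cancel_left, sub_self, zero_mul]

variable [IsGalois k K]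

/-- Surjectivity is witnessed by the `P_σ`, and both sides have `K`-dimension `|G|`. -/
lemma injective_pi_liftBaseChange :
    Function.Injective
      (LinearMap.pi fun σ : K ≃ₐ[k] K => LinearMap.liftBaseChange K σ.toLinearMap) := by
  classical
  obtain ⟨t, ht⟩ := Field.exists_primitive_element k K
  refine (LinearMap.injective_iff_surjective_of_finrank_eq_finrank ?_).mpr fun f => ?_
  · rw [Module.finrank_baseChange, Module.finrank_fintype_fun_eq_card,
      ← Nat.card_eq_fintype_card, IsGalois.card_aut_eq_finrank]
  refine ⟨∑ σ : K ≃ₐ[k] K, f σ⁻¹ • Psigma k K t σ, funext fun π => ?_⟩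
  simp only [LinearMap.pi_apply, map_sum, map_smul, liftBaseChange_algEquiv_apply,
    mulEval_Psigma ht, smul_eq_mul, mul_ite, mul_one, mul_zero, eq_comm (a := (1 : K ≃ₐ[k] K)),
    mul_eq_one_iff_inv_eq, Finset.sum_ite_eq, Finset.mem_univ, if_true, inv_inv]

lemma galoisSeparating_mulEval_algEquiv :
    GaloisSeparating fun p : (K ≃ₐ[k] K) × (K ≃ₐ[k] K) =>
      mulEval p.1.toLinearMap p.2.toLinearMap := by
  refine ⟨(injective_iff_map_eq_zero _).mpr fun z hz => ?_, fun π p => ⟨(π * p.1, π * p.2), ?_⟩⟩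
  · refine (injective_iff_map_eq_zero _).mp injective_pi_liftBaseChange z (funext fun σ => ?_)
    simpa [liftBaseChange_algEquiv_apply] using congr_fun hz (1, σ)
  · exact comp_mulEval π _ _

variable {ι V : Type*} [Finite ι] [AddCommGroup V] [Module k V] {F : ι → V →ₗ[k] K}

/-- Applying `Id ⊗ F i` reduces the claim to the separation of `K ⊗ K`;
flatness of `K` then recovers `z` from the `(Id ⊗ F i) z`. -/
theorem GaloisSeparating.tensorLeft (hF : GaloisSeparating F) :
    GaloisSeparating fun p : (K ≃ₐ[k] K) × ι => mulEval p.1.toLinearMap (F p.2) := by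
  refine ⟨(injective_iff_map_eq_zero _).mpr fun z hz => ?_, fun π p => ?_⟩
  · have hslice : ∀ i, (F i).lTensor K z = 0 := fun i =>
      galoisSeparating_mulEval_algEquiv.eq_zero fun ⟨ρ, π⟩ => by
        obtain ⟨j, hj⟩ := hF.2 π i
        have h := LinearMap.congr_fun (mulEval_comp_map ρ.toLinearMap π.toLinearMap
          LinearMap.id (F i)) z
        rw [LinearMap.comp_id, hj] at h
        exact h.trans (congr_fun hz (ρ, j))
    exact (injective_iff_map_eq_zero _).mp (injective_pi_lTensor (M := K) hF.1) z
      (funext hslice)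
  · obtain ⟨j, hj⟩ := hF.2 π p.2
    exact ⟨(π * p.1, j), by dsimp only; rw [comp_mulEval π, ← hj]; rfl⟩

theorem GaloisSeparating.tensorLeftOp (hF : GaloisSeparating F) :
    GaloisSeparating fun p : (K ≃ₐ[k] K) × ι => mulEval (opEval p.1) (F p.2) := by
  refine ⟨?_, fun π p => ?_⟩
  · have hpi : LinearMap.pi (fun p : (K ≃ₐ[k] K) × ι => mulEval (opEval p.1) (F p.2))
        = LinearMap.pi (fun p : (K ≃ₐ[k] K) × ι => mulEval p.1.toLinearMap (F p.2))
          ∘ₗ map (unopL k K) LinearMap.id := by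
      simp only [LinearMap.pi_comp, mulEval_comp_map, LinearMap.comp_id]
      rfl
    rw [hpi]
    exact hF.tensorLeft.1.comp
      (TensorProduct.congr (MulOpposite.opLinearEquiv k).symm (LinearEquiv.refl k V)).injective
  · obtain ⟨j, hj⟩ := hF.2 π p.2
    exact ⟨(π * p.1, j), by dsimp only; rw [comp_mulEval π, ← hj]; rfl⟩

lemma galoisSeparating_eval3 :
    GaloisSeparating fun p : (K ≃ₐ[k] K) × (K ≃ₐ[k] K) × (K ≃ₐ[k] K) =>
      eval3 p.1 p.2.1 p.2.2 :=
  (galoisSeparating_algEquiv (k := k) (K := K)).tensorLeftOp.tensorLeft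

lemma galoisSeparating_eval5 :
    GaloisSeparating fun p : (K ≃ₐ[k] K) × (K ≃ₐ[k] K) × (K ≃ₐ[k] K) × (K ≃ₐ[k] K) ×
        (K ≃ₐ[k] K) => eval5 p.1 p.2.1 p.2.2.1 p.2.2.2.1 p.2.2.2.2 :=
  (galoisSeparating_eval3 (k := k) (K := K)).tensorLeftOp.tensorLeft

end Separating

section Torsor

variable {k K : Type*} [Field k] [Field K] [Algebra k K]

lemma eval3_comp_galoisConv (ρ π ψ : K ≃ₐ[k] K) :
    eval3 ρ π ψ ∘ₗ (galoisConv k K).toLinearMap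
      = mulEval (mulEval ρ.toLinearMap π.toLinearMap) ψ.toLinearMap :=
  TensorProduct.ext_threefold fun _ _ _ => by
    simp [eval3, opEval, unopL, galoisConv, mul_assoc]

lemma eval3_eq_productMap (ρ π ψ : K ≃ₐ[k] K) :
    eval3 ρ π ψ = (Algebra.TensorProduct.productMap ρ.toAlgHom
      (Algebra.TensorProduct.productMap
        (π.toAlgHom.comp (AlgEquiv.toOpposite k K).symm.toAlgHom) ψ.toAlgHom)).toLinearMap := by
  rw [productMap_toLinearMap, productMap_toLinearMap]
  rfl

lemma eval3_one (ρ π ψ : K ≃ₐ[k] K) : eval3 ρ π ψ 1 = 1 := by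
  rw [eval3_eq_productMap]
  exact (Algebra.TensorProduct.productMap _ _).map_one'

lemma eval3_mul (ρ π ψ : K ≃ₐ[k] K) (u v : K ⊗[k] (Kᵐᵒᵖ ⊗[k] K)) :
    eval3 ρ π ψ (u * v) = eval3 ρ π ψ u * eval3 ρ π ψ v := by
  rw [eval3_eq_productMap]
  exact (Algebra.TensorProduct.productMap _ _).map_mul' u v

variable [FiniteDimensional k K] {t : K}

lemma eval3_muGalois (ht : IntermediateField.adjoin k {t} = ⊤) (ρ π ψ : K ≃ₐ[k] K) (x : K) :
    eval3 ρ π ψ (muGalois k K t x) = (ψ * π⁻¹ * ρ) x := by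
  classical
  have hσ : ∀ σ : K ≃ₐ[k] K, eval3 ρ π ψ (galoisConv k K (Psigma k K t σ ⊗ₜ σ x))
      = if π⁻¹ * ρ = σ then ψ (σ x) else 0 := fun σ => by
    rw [← LinearEquiv.coe_toLinearMap, ← LinearMap.comp_apply, eval3_comp_galoisConv,
      mulEval_tmul, mulEval_Psigma ht, ← inv_mul_eq_iff_eq_mul]
    split_ifs <;> simp
  rw [muGalois, LinearMap.sum_apply, map_sum]
  simp only [LinearMap.comp_apply, TensorProduct.mk_apply, LinearEquiv.coe_coe,
    AlgEquiv.toLinearMap_apply, hσ, Finset.sum_ite_eq, Finset.mem_univ, if_true,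
    AlgEquiv.mul_apply]

lemma eval3_comp_muGalois (ht : IntermediateField.adjoin k {t} = ⊤) (ρ π ψ : K ≃ₐ[k] K) :
    eval3 ρ π ψ ∘ₗ muGalois k K t = (ψ * π⁻¹ * ρ).toLinearMap :=
  LinearMap.ext (eval3_muGalois ht ρ π ψ)

lemma eval5_comp_mu3 (ht : IntermediateField.adjoin k {t} = ⊤) (ρ π a b c : K ≃ₐ[k] K) :
    eval5 ρ π a b c ∘ₗ mu3 k K (muGalois k K t) = eval3 ρ π (c * b⁻¹ * a) := by
  simp only [eval5, eval3, mu3, mulEval_comp_map, LinearMap.comp_id]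
  rw [← eval3, eval3_comp_muGalois ht]

lemma eval5_comp_mu1 (ht : IntermediateField.adjoin k {t} = ⊤) (ρ π a b c : K ≃ₐ[k] K) :
    eval5 ρ π a b c ∘ₗ mu1 k K (muGalois k K t) = eval3 (a * π⁻¹ * ρ) b c := by
  simp only [eval5, eval3, mu1, ← LinearMap.comp_assoc, mulEval_comp_map, LinearMap.comp_id,
    mulEval_mulEval_comp_assoc]
  rw [← eval3, eval3_comp_muGalois ht]

lemma mulEval_opEval_comp_muopO (ht : IntermediateField.adjoin k {t} = ⊤) (π a b : K ≃ₐ[k] K) :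
    mulEval (opEval π) (mulEval a.toLinearMap (opEval b)) ∘ₗ muopO k K (muGalois k K t)
      = opEval (π * a⁻¹ * b) := by
  have hswap : mulEval (opEval π) (mulEval a.toLinearMap (opEval b)) ∘ₗ oppify k K
        ∘ₗ (tau13 k K).toLinearMap = eval3 b a π :=
    TensorProduct.ext_threefold' fun _ _ _ => by
      simp [eval3, opEval, oppify, tau13, unopL, opL]
      ring
  rw [muopO, ← LinearMap.comp_assoc, ← LinearMap.comp_assoc, LinearMap.comp_assoc _ (oppify k K),
    hswap, ← LinearMap.comp_assoc, eval3_comp_muGalois ht]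
  rfl

lemma eval5_comp_muMid (ht : IntermediateField.adjoin k {t} = ⊤) (ρ π a b c : K ≃ₐ[k] K) :
    eval5 ρ π a b c ∘ₗ muMid k K (muGalois k K t) = eval3 ρ (π * a⁻¹ * b) c := by
  simp only [eval5, eval3, muMid, ← LinearMap.comp_assoc, mulEval_comp_map, LinearMap.comp_id,
    mulEval_mulEval_comp_assoc, mulEval_opEval_comp_muopO ht]

variable [IsGalois k K]

lemma muGalois_map_one (ht : IntermediateField.adjoin k {t} = ⊤) : muGalois k K t 1 = 1 :=
  galoisSeparating_eval3.ext fun ⟨ρ, π, ψ⟩ => by rw [eval3_muGalois ht, map_one, eval3_one]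

lemma muGalois_map_mul (ht : IntermediateField.adjoin k {t} = ⊤) (x y : K) :
    muGalois k K t (x * y) = muGalois k K t x * muGalois k K t y :=
  galoisSeparating_eval3.ext fun ⟨ρ, π, ψ⟩ => by
    rw [eval3_mul, eval3_muGalois ht, eval3_muGalois ht, eval3_muGalois ht, map_mul]

lemma muGalois_left_law (ht : IntermediateField.adjoin k {t} = ⊤) (x : K) :
    map LinearMap.id (mulOT k K) (muGalois k K t x) = x ⊗ₜ[k] (1 : K) :=
  galoisSeparating_mulEval_algEquiv.ext fun ⟨ρ, π⟩ => by
    have h : mulEval ρ.toLinearMap π.toLinearMap ∘ₗ map LinearMap.id (mulOT k K) = eval3 ρ π π :=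
      TensorProduct.ext_threefold' fun _ _ _ => by
        simp [eval3, opEval, unopL, mulOT, mulTT]
    rw [← LinearMap.comp_apply, h, eval3_muGalois ht, mul_inv_cancel]
    simp

lemma muGalois_right_law (ht : IntermediateField.adjoin k {t} = ⊤) (x : K) :
    m12 k K (muGalois k K t x) = (1 : K) ⊗ₜ[k] x :=
  galoisSeparating_mulEval_algEquiv.ext fun ⟨ρ, π⟩ => by
    have h : mulEval ρ.toLinearMap π.toLinearMap ∘ₗ m12 k K = eval3 ρ ρ π :=
      TensorProduct.ext_threefold' fun _ _ _ => by
        simp [eval3, opEval, unopL, m12, mulTO, mulTT, mul_assoc]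
    rw [← LinearMap.comp_apply, h, eval3_muGalois ht, inv_mul_cancel_right]
    simp

lemma muGalois_coassoc (ht : IntermediateField.adjoin k {t} = ⊤) (x : K) :
    mu3 k K (muGalois k K t) (muGalois k K t x) = mu1 k K (muGalois k K t) (muGalois k K t x) :=
  galoisSeparating_eval5.ext fun ⟨ρ, π, a, b, c⟩ => by
    rw [← LinearMap.comp_apply (eval5 ρ π a b c), ← LinearMap.comp_apply (eval5 ρ π a b c),
      eval5_comp_mu3 ht, eval5_comp_mu1 ht, eval3_muGalois ht, eval3_muGalois ht]
    simp only [mul_assoc]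

lemma muGalois_theta_law (ht : IntermediateField.adjoin k {t} = ⊤) (x : K) :
    mu1 k K (muGalois k K t) (muGalois k K t x) = muMid k K (muGalois k K t) (muGalois k K t x) :=
  galoisSeparating_eval5.ext fun ⟨ρ, π, a, b, c⟩ => by
    rw [← LinearMap.comp_apply (eval5 ρ π a b c), ← LinearMap.comp_apply (eval5 ρ π a b c),
      eval5_comp_mu1 ht, eval5_comp_muMid ht, eval3_muGalois ht, eval3_muGalois ht]
    simp only [mul_inv_rev, inv_inv, mul_assoc]

lemma muGalois_algEquiv_apply (ht : IntermediateField.adjoin k {t} = ⊤) (σ : K ≃ₐ[k] K) (x : K) :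
    muGalois k K t (σ x)
      = map σ.toLinearMap (map (thetaOp k K σ.toLinearMap) σ.toLinearMap) (muGalois k K t x) :=
  galoisSeparating_eval3.ext fun ⟨ρ, π, ψ⟩ => by
    have h : eval3 ρ π ψ ∘ₗ map σ.toLinearMap (map (thetaOp k K σ.toLinearMap) σ.toLinearMap)
        = eval3 (ρ * σ) (π * σ) (ψ * σ) :=
      TensorProduct.ext_threefold' fun _ _ _ => by simp [eval3, opEval, thetaOp, unopL, opL]
    dsimp only
    rw [eval3_muGalois ht, ← LinearMap.comp_apply (eval3 ρ π ψ), h, eval3_muGalois ht,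
      ← AlgEquiv.mul_apply]
    congr 1
    group

end Torsor

end GaloisTorsor

open GaloisTorsor

open TensorProduct QT in
/-- Example 2.7: a Galois extension `K = k[T]/(P)` of `k` with primitive
element `t`, Galois group `G` and `P_σ := ∏_{τ ≠ σ} (t₁ − τ(t₂))/(σ(t₂) − τ(t₂))`, endowed
with the law `μ_K(x) = ∑_{σ ∈ G} P_σ ⊗ σ(x)` and `θ = Id`, is a `k`-torsor, and every
element of the Galois group is an automorphism of this torsor. -/
theorem galois_extension_isTorsor (k K : Type*) [Field k] [Field K] [Algebra k K]
    [FiniteDimensional k K] [IsGalois k K]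
    (t : K) (ht : IntermediateField.adjoin k {t} = ⊤) :
    IsTorsor k K (muGalois k K t) LinearMap.id ∧
    ∀ σ : K ≃ₐ[k] K, ∀ x : K,
      muGalois k K t (σ x)
        = map σ.toLinearMap (map (thetaOp k K σ.toLinearMap) σ.toLinearMap)
            (muGalois k K t x) := by
  refine ⟨⟨muGalois_map_one ht, muGalois_map_mul ht, rfl,
    fun _ _ => rfl, Function.bijective_id, muGalois_left_law ht,
    muGalois_right_law ht, muGalois_coassoc ht, fun x => ?_,
    fun x => ?_⟩, muGalois_algEquiv_apply ht⟩
  · simpa [theta3] using muGalois_theta_law ht x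
  · rw [show thetaOp k K LinearMap.id = LinearMap.id from rfl, map_id, map_id]
    rfl
end
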